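/- arXiv:1405.3872 — 3 statements merged into one kernel-verified Lean document; each statement's English description precedes it below -/
import Mathlib

section
/- Let p be an odd prime, n ≥ 1, and λ a unit of ZMod (p^n) with λ^(p^n) = 1, and let G = G(λ,n,n). Then every element g = (a,x) of G such that it is not the case that both p divides a and p divides x has order exactly p^n, i.e., orderOf g = p^n. -/
def IsBeauvilleStructure {G : Type*} [Group G] (x y z a b c : G) : Prop :=
  x * y * z = 1 ∧ a * b * c = 1 ∧
  Subgroup.closure {x, y, z} = ⊤ ∧ Subgroup.closure {a, b, c} = ⊤ ∧
  ∀ u ∈ ({x, y, z} : Set G), ∀ v ∈ ({a, b, c} : Set G), ∀ g : G, ∀ i j : ℤ,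
    u ^ i = g * v ^ j * g⁻¹ → u ^ i = 1

/-- The homomorphism `ZMod (p^n) → (ZMod (p^m))ˣ` sending (the class of) `x` to `λ^x`,
well-defined since `λ^(p^n) = 1`. -/
def zmodUnitHom (p m n : ℕ) (lam : (ZMod (p^m))ˣ) (h : lam ^ (p^n) = 1) :
    Multiplicative (ZMod (p^n)) →* (ZMod (p^m))ˣ :=
  AddMonoidHom.toMultiplicativeLeft
    (ZMod.lift (p^n) ⟨(zmultiplesHom (Additive (ZMod (p^m))ˣ)) (Additive.ofMul lam), by
      show ((p^n : ℕ) : ℤ) • Additive.ofMul lam = 0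
      rw [← ofMul_zpow, zpow_natCast, h]
      rfl⟩)

/-- Additive automorphisms of `R` as multiplicative automorphisms of `Multiplicative R`. -/
def addAutToMulAut (R : Type*) [AddZeroClass R] :
    Multiplicative (AddAut R) →* MulAut (Multiplicative R) where
  toFun e := AddEquiv.toMultiplicative (Multiplicative.toAdd e)
  map_one' := rfl
  map_mul' _ _ := rfl

/-- The action of `ZMod (p^n)` on `ZMod (p^m)` where `x` acts by multiplication by `λ^x`. -/
def beauvilleAut (p m n : ℕ) (lam : (ZMod (p^m))ˣ) (h : lam ^ (p^n) = 1) :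
    Multiplicative (ZMod (p^n)) →* MulAut (Multiplicative (ZMod (p^m))) :=
  ((addAutToMulAut (ZMod (p^m))).comp AddAut.mulLeft).comp (zmodUnitHom p m n lam h)

/-- The semidirect product `G(λ,m,n) = ZMod (p^m) ⋊_λ ZMod (p^n)`. -/
abbrev BeauvilleGroup (p m n : ℕ) (lam : (ZMod (p^m))ˣ) (h : lam ^ (p^n) = 1) :=
  SemidirectProduct (Multiplicative (ZMod (p^m))) (Multiplicative (ZMod (p^n)))
    (beauvilleAut p m n lam h)

/-!
Write `g = (a, x)` and `w = λ^x`, so that `g^k = ((1 + w + ⋯ + w^(k-1)) a, k x)`. Every `λ^y` is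
`≡ 1 mod p`, because its `p^n`-th power is `1` and Frobenius is the identity of `ZMod p`; hence the
geometric sum of length `p^n` is divisible by `p^n` and `g^(p^n) = 1`. If `g^(p^(n-1)) = 1`, then
`p^(n-1) x = 0` forces `p ∣ x`, so `w` is the `p`-th power of a unit `≡ 1 mod p` and thus
`w ≡ 1 mod p^2`. The geometric sum of length `p^(n-1)` is then `≡ p^(n-1) mod p^n`, and
`p^(n-1) a = 0` forces `p ∣ a`.
-/

open Finset

section GeomSum

variable {R : Type*} [CommRing R]

theorem geom_sum_range_mul (W : R) (m k : ℕ) :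
    ∑ i ∈ range (m * k), W ^ i = (∑ i ∈ range m, W ^ i) * ∑ j ∈ range k, (W ^ m) ^ j := by
  induction k with
  | zero => simp
  | succ k ih =>
    simp_rw [Nat.mul_succ, sum_range_add, ih, sum_range_succ, pow_add, ← mul_sum, pow_mul]
    ring

theorem sub_one_dvd_geom_sum_sub (W : R) (m : ℕ) : W - 1 ∣ ∑ i ∈ range m, W ^ i - m := by
  have : ∑ i ∈ range m, W ^ i - m = ∑ i ∈ range m, (W ^ i - 1) := by simp [sum_sub_distrib]
  rw [this]
  exact dvd_sum fun i _ => sub_one_dvd_pow_sub_one W i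

variable {p : ℕ} {W : R}

theorem natCast_pow_dvd_geom_sum_prime_pow (h : (p : R) ∣ W - 1) (k : ℕ) :
    (p : R) ^ k ∣ ∑ i ∈ range (p ^ k), W ^ i := by
  induction k with
  | zero => simp
  | succ k ih =>
    have hT : (p : R) ∣ ∑ j ∈ range p, (W ^ p ^ k) ^ j := dvd_sub_self_right.mp <|
      (h.trans (sub_one_dvd_pow_sub_one W _)).trans (sub_one_dvd_geom_sum_sub _ p)
    rw [pow_succ p k, geom_sum_range_mul, pow_succ]
    exact mul_dvd_mul ih hT

theorem natCast_pow_succ_dvd_geom_sum_prime_pow_sub (h : (p : R) ^ 2 ∣ W - 1) (k : ℕ) :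
    (p : R) ^ (k + 1) ∣ ∑ i ∈ range (p ^ k), W ^ i - (p : R) ^ k := by
  induction k with
  | zero => simp
  | succ k ih =>
    set S := ∑ i ∈ range (p ^ k), W ^ i
    set T := ∑ j ∈ range p, (W ^ p ^ k) ^ j
    have hT : (p : R) ^ 2 ∣ T - p :=
      (h.trans (sub_one_dvd_pow_sub_one W _)).trans (sub_one_dvd_geom_sum_sub _ p)
    have hTp : (p : R) ∣ T := dvd_sub_self_right.mp ((dvd_pow_self _ two_ne_zero).trans hT)
    have key : S * T - (p : R) ^ (k + 1) = (S - (p : R) ^ k) * T + (p : R) ^ k * (T - p) := by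
      ring
    rw [pow_succ p k, geom_sum_range_mul, key]
    refine dvd_add ?_ ?_
    · rw [pow_succ]
      exact mul_dvd_mul ih hTp
    · rw [show k + 1 + 1 = k + 2 from rfl, pow_add]
      exact mul_dvd_mul_left _ hT

end GeomSum

namespace ZMod

theorem natCast_dvd_of_dvd_val {N p : ℕ} [NeZero N] {a : ZMod N} (h : p ∣ a.val) :
    (p : ZMod N) ∣ a :=
  natCast_zmod_val a ▸ Nat.cast_dvd_cast h

variable {p : ℕ}

theorem natCast_dvd_sub_one_of_pow_eq_one [Fact p.Prime] {m n : ℕ} {w : ZMod (p ^ (m + 1))}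
    (hw : w ^ p ^ n = 1) : (p : ZMod (p ^ (m + 1))) ∣ w - 1 := by
  let f := castHom (dvd_pow_self p m.succ_ne_zero) (ZMod p)
  have hf : f (w - 1) = 0 := by
    rw [map_sub, map_one, sub_eq_zero, ← pow_card_pow (n := n) (f w), ← map_pow, hw, map_one]
  rw [castHom_apply, cast_eq_val, natCast_eq_zero_iff] at hf
  exact natCast_dvd_of_dvd_val hf

theorem natCast_dvd_of_natCast_pow_mul_eq_zero [NeZero p] {k : ℕ} {a : ZMod (p ^ (k + 1))}
    (h : (p : ZMod (p ^ (k + 1))) ^ k * a = 0) : (p : ZMod (p ^ (k + 1))) ∣ a := by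
  rw [← natCast_zmod_val a, ← Nat.cast_pow, ← Nat.cast_mul, natCast_eq_zero_iff] at h
  refine natCast_dvd_of_dvd_val ((Nat.mul_dvd_mul_iff_left (pow_pos (NeZero.pos p) k)).mp ?_)
  rwa [← pow_succ]

theorem multiplicative_pow_self {N : ℕ} (y : Multiplicative (ZMod N)) : y ^ N = 1 := by
  rw [← toAdd_eq_zero, toAdd_pow, nsmul_eq_mul, natCast_self, zero_mul]

end ZMod

namespace SemidirectProduct

variable {N G : Type*} [CommGroup N] [Group G] {φ : G →* MulAut N}

theorem pow_right (g : N ⋊[φ] G) (k : ℕ) : (g ^ k).right = g.right ^ k :=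
  map_pow rightHom g k

theorem pow_left (g : N ⋊[φ] G) (k : ℕ) :
    (g ^ k).left = ∏ i ∈ range k, φ (g.right ^ i) g.left := by
  induction k with
  | zero => simp
  | succ k ih => rw [pow_succ, mul_left, ih, pow_right, prod_range_succ]

end SemidirectProduct

namespace BeauvilleGroup

variable {p m n : ℕ}

theorem toAdd_pow_left {lam : (ZMod (p ^ m))ˣ} {h : lam ^ (p ^ n) = 1}
    (g : BeauvilleGroup p m n lam h) (k : ℕ) :
    Multiplicative.toAdd (g ^ k).left =
      (∑ i ∈ range k, ((zmodUnitHom p m n lam h g.right : (ZMod (p ^ m))ˣ) : ZMod (p ^ m)) ^ i) *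
        Multiplicative.toAdd g.left := by
  rw [SemidirectProduct.pow_left, toAdd_prod, sum_mul]
  refine sum_congr rfl fun i _ => ?_
  show ((zmodUnitHom p m n lam h (g.right ^ i) : (ZMod (p ^ m))ˣ) : ZMod (p ^ m)) * _ = _
  rw [map_pow, Units.val_pow_eq_pow_val]

theorem natCast_dvd_zmodUnitHom_sub_one [Fact p.Prime] {lam : (ZMod (p ^ (m + 1)))ˣ}
    {h : lam ^ (p ^ n) = 1} (y : Multiplicative (ZMod (p ^ n))) :
    (p : ZMod (p ^ (m + 1))) ∣ (zmodUnitHom p (m + 1) n lam h y : ZMod (p ^ (m + 1))) - 1 := by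
  refine ZMod.natCast_dvd_sub_one_of_pow_eq_one (n := n) ?_
  rw [← Units.val_pow_eq_pow_val, ← map_pow, ZMod.multiplicative_pow_self, map_one, Units.val_one]

theorem pow_prime_pow_eq_one [Fact p.Prime] (hmn : m + 1 ≤ n) {lam : (ZMod (p ^ (m + 1)))ˣ}
    {h : lam ^ (p ^ n) = 1} (g : BeauvilleGroup p (m + 1) n lam h) : g ^ p ^ n = 1 := by
  have hpn : (p : ZMod (p ^ (m + 1))) ^ n = 0 := by
    rw [← Nat.cast_pow, ZMod.natCast_eq_zero_iff]
    exact pow_dvd_pow p hmn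
  have hgeom :=
    natCast_pow_dvd_geom_sum_prime_pow (natCast_dvd_zmodUnitHom_sub_one (h := h) g.right) n
  rw [hpn, zero_dvd_iff] at hgeom
  refine SemidirectProduct.ext ?_ ?_
  · rw [SemidirectProduct.one_left, ← toAdd_eq_zero, toAdd_pow_left, hgeom, zero_mul]
  · rw [SemidirectProduct.one_right, SemidirectProduct.pow_right, ZMod.multiplicative_pow_self]

theorem natCast_dvd_left_and_right_of_pow_prime_pow_eq_one [Fact p.Prime] {k : ℕ}
    {lam : (ZMod (p ^ (k + 1)))ˣ} {h : lam ^ (p ^ (k + 1)) = 1}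
    {g : BeauvilleGroup p (k + 1) (k + 1) lam h} (hg : g ^ p ^ k = 1) :
    (p : ZMod (p ^ (k + 1))) ∣ Multiplicative.toAdd g.left ∧
      (p : ZMod (p ^ (k + 1))) ∣ Multiplicative.toAdd g.right := by
  obtain ⟨c, hc⟩ : (p : ZMod (p ^ (k + 1))) ∣ Multiplicative.toAdd g.right := by
    refine ZMod.natCast_dvd_of_natCast_pow_mul_eq_zero ?_
    have := congrArg Multiplicative.toAdd (SemidirectProduct.pow_right g (p ^ k))
    rwa [hg, toAdd_pow, nsmul_eq_mul, Nat.cast_pow, eq_comm] at this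
  have hw : (p : ZMod (p ^ (k + 1))) ^ 2 ∣
      (zmodUnitHom p (k + 1) (k + 1) lam h g.right : ZMod (p ^ (k + 1))) - 1 := by
    have : g.right = Multiplicative.ofAdd c ^ p := by
      rw [← ofAdd_nsmul, nsmul_eq_mul, ← hc, ofAdd_toAdd]
    rw [this, map_pow, Units.val_pow_eq_pow_val]
    simpa using
      dvd_sub_pow_of_dvd_sub (natCast_dvd_zmodUnitHom_sub_one (Multiplicative.ofAdd c)) 1
  have hgeom := natCast_pow_succ_dvd_geom_sum_prime_pow_sub hw k
  rw [← Nat.cast_pow, ZMod.natCast_self, zero_dvd_iff, sub_eq_zero] at hgeom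
  refine ⟨ZMod.natCast_dvd_of_natCast_pow_mul_eq_zero ?_, ⟨c, hc⟩⟩
  rw [← hgeom, ← toAdd_pow_left, hg]
  rfl

end BeauvilleGroup

theorem orderOf_eq_pPow_of_not_divisible_general
    (p n : ℕ) (hp : p.Prime) (hn : 1 ≤ n)
    (lam : (ZMod (p ^ n))ˣ) (h : lam ^ (p ^ n) = 1)
    (g : BeauvilleGroup p n n lam h)
    (hg : ¬ ((∃ b : ZMod (p ^ n), Multiplicative.toAdd g.left = (p : ZMod (p ^ n)) * b) ∧
             (∃ c : ZMod (p ^ n), Multiplicative.toAdd g.right = (p : ZMod (p ^ n)) * c))) :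
    orderOf g = p ^ n := by
  have := Fact.mk hp
  obtain ⟨k, rfl⟩ : ∃ k, n = k + 1 := ⟨n - 1, by omega⟩
  exact orderOf_eq_prime_pow
    (fun hg1 => hg (BeauvilleGroup.natCast_dvd_left_and_right_of_pow_prime_pow_eq_one hg1))
    (BeauvilleGroup.pow_prime_pow_eq_one le_rfl g)

/-- In `G(λ,n,n)` for odd `p`, every element `(a,x)` such that not both `p ∣ a`
and `p ∣ x` has order exactly `p^n`. -/
theorem orderOf_eq_pPow_of_not_divisible
    (p n : ℕ) (hp : p.Prime) (hodd : Odd p) (hn : 1 ≤ n)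
    (lam : (ZMod (p ^ n))ˣ) (h : lam ^ (p ^ n) = 1)
    (g : BeauvilleGroup p n n lam h)
    (hg : ¬ ((∃ b : ZMod (p ^ n), Multiplicative.toAdd g.left = (p : ZMod (p ^ n)) * b) ∧
             (∃ c : ZMod (p ^ n), Multiplicative.toAdd g.right = (p : ZMod (p ^ n)) * c))) :
    orderOf g = p ^ n :=
  orderOf_eq_pPow_of_not_divisible_general p n hp hn lam h g hg
end

section
/- Let p be an odd prime, m, n ≥ 1, and λ a unit of ZMod (p^m) with λ^(p^n) = 1. Then the Frattini subgroup of G(λ,m,n) equals the subgroup {(a,x) ∈ G(λ,m,n) : p divides a and p divides x}. -/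
/-!
Reduction modulo `p` of either coordinate is a homomorphism onto `ZMod p`: for the second
coordinate this is clear, for the first one it holds because `λ` has `p`-power order and hence
`λ ≡ 1 mod p` (Frobenius). Their kernels are maximal subgroups, which gives one inclusion.
For the other, an element `(p b, p c)` is the product `(b, 0) ^ p * (0, c) ^ p`, and `p`-th
powers lie in every maximal subgroup of a finite `p`-group, since such a subgroup is normal of
index `p`.
-/

open Multiplicative

namespace ZMod

theorem castHom_eq_zero_iff_dvd {m n : ℕ} (h : m ∣ n) (a : ZMod n) :
    castHom h (ZMod m) a = 0 ↔ (m : ZMod n) ∣ a := by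
  constructor
  · intro ha
    obtain ⟨z, rfl⟩ := intCast_surjective a
    rw [map_intCast, intCast_zmod_eq_zero_iff_dvd] at ha
    obtain ⟨w, rfl⟩ := ha
    exact ⟨w, by push_cast; rfl⟩
  · rintro ⟨b, rfl⟩
    rw [map_mul, map_natCast, natCast_self, zero_mul]

theorem castHom_units_eq_one_of_pow_eq_one {p n t : ℕ} [Fact p.Prime] (h : p ∣ n)
    {v : (ZMod n)ˣ} (hv : v ^ p ^ t = 1) : castHom h (ZMod p) v = 1 := by
  rw [← pow_card_pow (n := t) (castHom h (ZMod p) v), ← map_pow, ← Units.val_pow_eq_pow_val,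
    hv, Units.val_one, map_one]

end ZMod

theorem MonoidHom.isCoatom_ker_of_surjective {G H : Type*} [Group G] [Group H]
    [IsSimpleOrder (Subgroup H)] {f : G →* H} (hf : Function.Surjective f) : IsCoatom f.ker :=
  Subgroup.isCoatom_comap_of_surjective hf isCoatom_bot

theorem frattini_le_ker_of_surjective {G H : Type*} [Group G] [Group H]
    [IsSimpleOrder (Subgroup H)] {f : G →* H} (hf : Function.Surjective f) :
    frattini G ≤ f.ker :=
  frattini_le_coatom (MonoidHom.isCoatom_ker_of_surjective hf)

instance {p : ℕ} [Fact p.Prime] : IsSimpleOrder (Subgroup (Multiplicative (ZMod p))) :=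
  have := isSimpleGroup_of_prime_card (α := Multiplicative (ZMod p)) (p := p) (by simp)
  inferInstance

namespace IsPGroup

variable {p : ℕ} [Fact p.Prime] {G : Type*} [Group G] [Finite G]

theorem normal_of_isCoatom (hG : IsPGroup p G) {M : Subgroup G} (hM : IsCoatom M) : M.Normal :=
  have := hG.isNilpotent
  Subgroup.NormalizerCondition.normal_of_coatom M Group.normalizerCondition_of_isNilpotent hM

theorem index_eq_of_isCoatom (hG : IsPGroup p G) {M : Subgroup G} [M.Normal] (hM : IsCoatom M) :
    M.index = p := by
  have correspondence : Subgroup (G ⧸ M) ≃o Set.Ici M := QuotientGroup.comapMk'OrderIso M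
  have : IsSimpleOrder (Subgroup (G ⧸ M)) :=
    correspondence.isSimpleOrder_iff.mpr (Set.isSimpleOrder_Ici_iff_isCoatom.mpr hM)
  have : Nontrivial (G ⧸ M) := Subgroup.nontrivial_iff.mp inferInstance
  obtain ⟨k, hk, hcard⟩ := (hG.to_quotient M).nontrivial_iff_card.mp this
  obtain ⟨K, hK⟩ := Sylow.exists_subgroup_card_pow_prime p (n := 1) (hcard ▸ pow_dvd_pow p hk)
  have hK_top : K = ⊤ := (eq_bot_or_eq_top K).resolve_left fun hbot ↦ by
    rw [hbot, Subgroup.card_bot, pow_one] at hK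
    exact (Fact.out : p.Prime).one_lt.ne hK
  rw [Subgroup.index, ← Subgroup.card_top (G := G ⧸ M), ← hK_top, hK, pow_one]

theorem pow_mem_of_isCoatom (hG : IsPGroup p G) {M : Subgroup G} (hM : IsCoatom M) (g : G) :
    g ^ p ∈ M := by
  have := hG.normal_of_isCoatom hM
  simpa only [hG.index_eq_of_isCoatom hM] using M.pow_index_mem g

theorem pow_mem_frattini (hG : IsPGroup p G) (g : G) : g ^ p ∈ frattini G :=
  Subgroup.mem_iInf.mpr fun _ ↦ Subgroup.mem_iInf.mpr fun hM ↦ hG.pow_mem_of_isCoatom hM g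

end IsPGroup

namespace BeauvilleGroup

variable {p m n : ℕ} {lam : (ZMod (p ^ m))ˣ} {h : lam ^ p ^ n = 1}

theorem beauvilleAut_apply (x : Multiplicative (ZMod (p ^ n))) (a : Multiplicative (ZMod (p ^ m))) :
    beauvilleAut p m n lam h x a = ofAdd ((zmodUnitHom p m n lam h x : ZMod (p ^ m)) * toAdd a) :=
  rfl

theorem zmodUnitHom_pow_eq_one (x : Multiplicative (ZMod (p ^ n))) :
    zmodUnitHom p m n lam h x ^ p ^ n = 1 := by
  have : x ^ p ^ n = 1 := toAdd.injective (by simp [toAdd_pow])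
  rw [← map_pow, this, map_one]

theorem eq_inl_pow_mul_inr_pow {g : BeauvilleGroup p m n lam h} {b : ZMod (p ^ m)}
    {c : ZMod (p ^ n)} (hb : toAdd g.left = p * b) (hc : toAdd g.right = p * c) :
    g = SemidirectProduct.inl (ofAdd b) ^ p * SemidirectProduct.inr (ofAdd c) ^ p := by
  rw [← map_pow SemidirectProduct.inl, ← map_pow SemidirectProduct.inr, ← ofAdd_nsmul,
    ← ofAdd_nsmul, nsmul_eq_mul, nsmul_eq_mul, ← hb, ← hc, ofAdd_toAdd, ofAdd_toAdd,
    SemidirectProduct.inl_left_mul_inr_right]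

variable [Fact p.Prime]

theorem castHom_beauvilleAut (hm : m ≠ 0) (x : Multiplicative (ZMod (p ^ n)))
    (a : Multiplicative (ZMod (p ^ m))) :
    ZMod.castHom (dvd_pow_self p hm) (ZMod p) (toAdd (beauvilleAut p m n lam h x a)) =
      ZMod.castHom (dvd_pow_self p hm) (ZMod p) (toAdd a) := by
  rw [beauvilleAut_apply, toAdd_ofAdd, map_mul,
    ZMod.castHom_units_eq_one_of_pow_eq_one _ (zmodUnitHom_pow_eq_one x), one_mul]

variable (p m n lam h)

instance : Finite (BeauvilleGroup p m n lam h) :=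
  Finite.of_equiv _ SemidirectProduct.equivProd.symm

theorem isPGroup : IsPGroup p (BeauvilleGroup p m n lam h) :=
  IsPGroup.of_card (n := m + n) (by simp [SemidirectProduct.card, pow_add])

def leftModP (hm : m ≠ 0) : BeauvilleGroup p m n lam h →* Multiplicative (ZMod p) :=
  SemidirectProduct.lift (ZMod.castHom (dvd_pow_self p hm) (ZMod p)).toAddMonoidHom.toMultiplicative
    1 fun x ↦
      MonoidHom.ext fun a ↦ by simpa using congrArg ofAdd (castHom_beauvilleAut hm x a)

def rightModP (hn : n ≠ 0) : BeauvilleGroup p m n lam h →* Multiplicative (ZMod p) :=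
  (ZMod.castHom (dvd_pow_self p hn) (ZMod p)).toAddMonoidHom.toMultiplicative.comp
    SemidirectProduct.rightHom

variable {p m n lam h}

theorem leftModP_apply (hm : m ≠ 0) (g : BeauvilleGroup p m n lam h) :
    leftModP p m n lam h hm g =
      ofAdd (ZMod.castHom (dvd_pow_self p hm) (ZMod p) (toAdd g.left)) := by
  simp [leftModP, SemidirectProduct.lift]

theorem rightModP_apply (hn : n ≠ 0) (g : BeauvilleGroup p m n lam h) :
    rightModP p m n lam h hn g =
      ofAdd (ZMod.castHom (dvd_pow_self p hn) (ZMod p) (toAdd g.right)) :=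
  rfl

theorem leftModP_surjective (hm : m ≠ 0) : Function.Surjective (leftModP p m n lam h hm) := by
  intro t
  obtain ⟨a, ha⟩ := ZMod.castHom_surjective (dvd_pow_self p hm) (toAdd t)
  exact ⟨SemidirectProduct.inl (ofAdd a), by simp [leftModP_apply, ha]⟩

theorem rightModP_surjective (hn : n ≠ 0) : Function.Surjective (rightModP p m n lam h hn) := by
  intro t
  obtain ⟨a, ha⟩ := ZMod.castHom_surjective (dvd_pow_self p hn) (toAdd t)
  exact ⟨SemidirectProduct.inr (ofAdd a), by simp [rightModP_apply, ha]⟩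

theorem mem_ker_leftModP (hm : m ≠ 0) {g : BeauvilleGroup p m n lam h} :
    g ∈ (leftModP p m n lam h hm).ker ↔ (p : ZMod (p ^ m)) ∣ toAdd g.left := by
  rw [MonoidHom.mem_ker, leftModP_apply, ofAdd_eq_one, ZMod.castHom_eq_zero_iff_dvd]

theorem mem_ker_rightModP (hn : n ≠ 0) {g : BeauvilleGroup p m n lam h} :
    g ∈ (rightModP p m n lam h hn).ker ↔ (p : ZMod (p ^ n)) ∣ toAdd g.right := by
  rw [MonoidHom.mem_ker, rightModP_apply, ofAdd_eq_one, ZMod.castHom_eq_zero_iff_dvd]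

end BeauvilleGroup

theorem frattini_semidirect_eq_divisible_set_general
    (p m n : ℕ) (hp : p.Prime) (hm : 1 ≤ m) (hn : 1 ≤ n)
    (lam : (ZMod (p ^ m))ˣ) (h : lam ^ (p ^ n) = 1) :
    (frattini (BeauvilleGroup p m n lam h) : Set (BeauvilleGroup p m n lam h)) =
      {g : BeauvilleGroup p m n lam h |
        (∃ b : ZMod (p ^ m), Multiplicative.toAdd g.left = (p : ZMod (p ^ m)) * b) ∧
        (∃ c : ZMod (p ^ n), Multiplicative.toAdd g.right = (p : ZMod (p ^ n)) * c)} := by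
  have : Fact p.Prime := ⟨hp⟩
  have hm0 : m ≠ 0 := Nat.one_le_iff_ne_zero.mp hm
  have hn0 : n ≠ 0 := Nat.one_le_iff_ne_zero.mp hn
  ext g
  constructor
  · intro hg
    exact ⟨(BeauvilleGroup.mem_ker_leftModP hm0).mp
        (frattini_le_ker_of_surjective (BeauvilleGroup.leftModP_surjective hm0) hg),
      (BeauvilleGroup.mem_ker_rightModP hn0).mp
        (frattini_le_ker_of_surjective (BeauvilleGroup.rightModP_surjective hn0) hg)⟩
  · rintro ⟨⟨b, hb⟩, c, hc⟩
    rw [SetLike.mem_coe, BeauvilleGroup.eq_inl_pow_mul_inr_pow hb hc]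
    have hG := BeauvilleGroup.isPGroup p m n lam h
    exact mul_mem (hG.pow_mem_frattini _) (hG.pow_mem_frattini _)

/-- For odd `p`, the Frattini subgroup of `G(λ,m,n)` consists exactly of the
pairs `(a,x)` with `p ∣ a` and `p ∣ x`. -/
theorem frattini_semidirect_eq_divisible_set
    (p m n : ℕ) (hp : p.Prime) (hodd : Odd p) (hm : 1 ≤ m) (hn : 1 ≤ n)
    (lam : (ZMod (p ^ m))ˣ) (h : lam ^ (p ^ n) = 1) :
    (frattini (BeauvilleGroup p m n lam h) : Set (BeauvilleGroup p m n lam h)) =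
      {g : BeauvilleGroup p m n lam h |
        (∃ b : ZMod (p ^ m), Multiplicative.toAdd g.left = (p : ZMod (p ^ m)) * b) ∧
        (∃ c : ZMod (p ^ n), Multiplicative.toAdd g.right = (p : ZMod (p ^ n)) * c)} :=
  frattini_semidirect_eq_divisible_set_general p m n hp hm hn lam h
end

section
/- A finite abelian group G admits an unmixed Beauville structure if and only if there exists a natural number n with gcd(n,6) = 1 such that G is isomorphic to (ZMod n) × (ZMod n). -/
/-!
In an abelian group condition (iii) says that `⟨u⟩ ∩ ⟨v⟩ = 1` for `u ∈ {x, y, z}`, `v ∈ {a, b, c}`,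
so `ord u * ord v ∣ |G|` for all such pairs. As `G` is generated by `x, y` and by `a, b`, its
exponent `e` divides `lcm (ord x) (ord y)` and `lcm (ord a) (ord b)`, whence `e² ∣ |G|`; since `G`
is also a quotient of `(ℤ/e)²`, it is isomorphic to it.

In `(ℤ/n)²` two vectors generate iff their determinant is a unit. If `p = 2` or `3` divides `n`,
the plane `(ℤ/p)²` has only `p + 1 ≤ 4` lines, so the reductions of the triangles `x, y, z` and
`a, b, c` (three pairwise independent vectors each) share a line: `u ≡ l v (mod p)` with `u ≢ 0`.
Multiplying by `n / p` gives `u ^ (n / p) = v ^ (l n / p) ≠ 1`, contradicting (iii). Conversely, for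
`gcd(n, 6) = 1` the triangles of `(1, 0), (0, 1)` and `(1, 2), (3, 4)` work, since all the
determinants involved are of the form `±2^i 3^j`.
-/

open Multiplicative

theorem Nat.lcm_mul_lcm_dvd {a b c d n : ℕ} (hac : a * c ∣ n) (had : a * d ∣ n)
    (hbc : b * c ∣ n) (hbd : b * d ∣ n) : Nat.lcm a b * Nat.lcm c d ∣ n := by
  rw [← Nat.lcm_mul_right, ← Nat.lcm_mul_left, ← Nat.lcm_mul_left]
  exact Nat.lcm_dvd (Nat.lcm_dvd hac had) (Nat.lcm_dvd hbc hbd)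

theorem closure_pair_eq_top_of_mul_mul_eq_one {G : Type*} [Group G] {x y z : G}
    (h : x * y * z = 1) (hgen : Subgroup.closure {x, y, z} = ⊤) : Subgroup.closure {x, y} = ⊤ := by
  rw [eq_top_iff, ← hgen, Subgroup.closure_le]
  rintro w (rfl | rfl | rfl)
  · exact Subgroup.subset_closure (by simp)
  · exact Subgroup.subset_closure (by simp)
  · rw [eq_inv_of_mul_eq_one_right h]
    exact inv_mem (mul_mem (Subgroup.subset_closure (by simp)) (Subgroup.subset_closure (by simp)))

section CommGroup

variable {G : Type*} [CommGroup G]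

theorem exponent_dvd_lcm_orderOf {x y : G} (h : Subgroup.closure {x, y} = ⊤) :
    Monoid.exponent G ∣ Nat.lcm (orderOf x) (orderOf y) := by
  refine Monoid.exponent_dvd_of_forall_pow_eq_one fun g => ?_
  have hle : Subgroup.closure {x, y} ≤
      (powMonoidHom (Nat.lcm (orderOf x) (orderOf y)) : G →* G).ker := by
    rw [Subgroup.closure_le]
    rintro w (rfl | rfl) <;>
      simp [orderOf_dvd_iff_pow_eq_one.1, Nat.dvd_lcm_left, Nat.dvd_lcm_right]
  exact hle (h ▸ Subgroup.mem_top g)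

theorem orderOf_mul_orderOf_dvd_card [Finite G] {u v : G}
    (h : Disjoint (Subgroup.zpowers u) (Subgroup.zpowers v)) :
    orderOf u * orderOf v ∣ Nat.card G := by
  have := Subgroup.card_dvd_of_injective
    ((Subgroup.zpowers u).subtype.coprod (Subgroup.zpowers v).subtype)
    (Subgroup.mul_injective_of_disjoint h)
  rwa [Nat.card_prod, Nat.card_zpowers, Nat.card_zpowers] at this

theorem exists_surjective_zmod_prod {n : ℕ} {x y : G} (hx : x ^ n = 1) (hy : y ^ n = 1)
    (h : Subgroup.closure {x, y} = ⊤) :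
    ∃ F : Multiplicative (ZMod n × ZMod n) →* G, Function.Surjective F := by
  let f (g : G) (hg : g ^ n = 1) : ZMod n →+ Additive G :=
    ZMod.lift n ⟨zmultiplesHom _ (Additive.ofMul g), by
      rw [zmultiplesHom_apply, natCast_zsmul, ← ofMul_pow, hg, ofMul_one]⟩
  refine ⟨AddMonoidHom.toMultiplicativeLeft ((f x hx).coprod (f y hy)), fun g => ?_⟩
  obtain ⟨i, j, hij⟩ := Subgroup.mem_closure_pair.1 (h ▸ Subgroup.mem_top g)
  refine ⟨ofAdd (i, j), ?_⟩
  simp [f, AddMonoidHom.toMultiplicativeLeft, ZMod.lift_coe, ← hij]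

theorem nonempty_mulEquiv_zmod_prod_of_closure_pair [Finite G] {x y : G}
    (h : Subgroup.closure {x, y} = ⊤)
    (hcard : Monoid.exponent G * Monoid.exponent G ∣ Nat.card G) :
    Nonempty (G ≃* Multiplicative (ZMod (Monoid.exponent G) × ZMod (Monoid.exponent G))) := by
  set n := Monoid.exponent G
  have : NeZero n := ⟨Monoid.exponent_ne_zero_of_finite⟩
  obtain ⟨F, hF⟩ := exists_surjective_zmod_prod (Monoid.pow_exponent_eq_one x)
    (Monoid.pow_exponent_eq_one y) h
  have hcardM : Nat.card (Multiplicative (ZMod n × ZMod n)) = n * n := by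
    rw [Nat.card_congr toAdd, Nat.card_prod, Nat.card_zmod]
  have hcardF : Nat.card (Multiplicative (ZMod n × ZMod n)) = Nat.card G :=
    Nat.dvd_antisymm (hcardM ▸ hcard) (Subgroup.card_dvd_of_surjective F hF)
  exact ⟨(MulEquiv.ofBijective F ((Nat.bijective_iff_surjective_and_card F).2 ⟨hF, hcardF⟩)).symm⟩

end CommGroup

namespace IsBeauvilleStructure

section Group

variable {G : Type*} [Group G] {x y z a b c : G}

theorem closure_left_eq_top (h : IsBeauvilleStructure x y z a b c) : Subgroup.closure {x, y} = ⊤ :=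
  closure_pair_eq_top_of_mul_mul_eq_one h.1 h.2.2.1

theorem closure_right_eq_top (h : IsBeauvilleStructure x y z a b c) : Subgroup.closure {a, b} = ⊤ :=
  closure_pair_eq_top_of_mul_mul_eq_one h.2.1 h.2.2.2.1

theorem map {H : Type*} [Group H] (e : G ≃* H) (h : IsBeauvilleStructure x y z a b c) :
    IsBeauvilleStructure (e x) (e y) (e z) (e a) (e b) (e c) := by
  have himage (p q r : G) : ({e p, e q, e r} : Set H) = e '' {p, q, r} := by
    simp only [Set.image_insert_eq, Set.image_singleton]
  have hgen {p q r : G} (hpqr : Subgroup.closure {p, q, r} = ⊤) :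
      Subgroup.closure {e p, e q, e r} = ⊤ := by
    rw [himage, ← e.coe_toMonoidHom, ← MonoidHom.map_closure, hpqr]
    exact Subgroup.map_top_of_surjective _ e.surjective
  obtain ⟨hxyz, habc, hgen₁, hgen₂, hfree⟩ := h
  refine ⟨by simp [← map_mul, hxyz], by simp [← map_mul, habc], hgen hgen₁, hgen hgen₂, ?_⟩
  simp only [himage, Set.forall_mem_image]
  intro u hu v hv g i j huv
  rw [← e.apply_symm_apply g, ← map_zpow, ← map_zpow, ← map_inv, ← map_mul, ← map_mul,
    e.injective.eq_iff] at huv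
  rw [← map_zpow, hfree u hu v hv _ i j huv, map_one]

end Group

section CommGroup

variable {G : Type*} [CommGroup G] {x y z a b c : G}

theorem disjoint_zpowers (h : IsBeauvilleStructure x y z a b c) {u v : G}
    (hu : u ∈ ({x, y, z} : Set G)) (hv : v ∈ ({a, b, c} : Set G)) :
    Disjoint (Subgroup.zpowers u) (Subgroup.zpowers v) := by
  rw [Subgroup.disjoint_def']
  rintro _ _ ⟨i, rfl⟩ ⟨j, rfl⟩ hij
  exact h.2.2.2.2 u hu v hv 1 i j (by simpa using hij)

theorem exponent_mul_self_dvd_card [Finite G] (h : IsBeauvilleStructure x y z a b c) :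
    Monoid.exponent G * Monoid.exponent G ∣ Nat.card G := by
  have hdvd {u v : G} (hu : u ∈ ({x, y, z} : Set G)) (hv : v ∈ ({a, b, c} : Set G)) :
      orderOf u * orderOf v ∣ Nat.card G :=
    orderOf_mul_orderOf_dvd_card (h.disjoint_zpowers hu hv)
  refine (Nat.mul_dvd_mul (exponent_dvd_lcm_orderOf h.closure_left_eq_top)
    (exponent_dvd_lcm_orderOf h.closure_right_eq_top)).trans ?_
  exact Nat.lcm_mul_lcm_dvd (hdvd (by simp) (by simp)) (hdvd (by simp) (by simp))
    (hdvd (by simp) (by simp)) (hdvd (by simp) (by simp))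

theorem nonempty_mulEquiv_zmod_prod [Finite G] (h : IsBeauvilleStructure x y z a b c) :
    Nonempty (G ≃* Multiplicative (ZMod (Monoid.exponent G) × ZMod (Monoid.exponent G))) :=
  nonempty_mulEquiv_zmod_prod_of_closure_pair h.closure_left_eq_top h.exponent_mul_self_dvd_card

end CommGroup

end IsBeauvilleStructure

section Det

variable {R : Type*} [CommRing R]

def det2 (u v : R × R) : R := u.1 * v.2 - u.2 * v.1

theorem map_det2 {S : Type*} [CommRing S] (f : R →+* S) (u v : R × R) :
    det2 (f.prodMap f u) (f.prodMap f v) = f (det2 u v) := by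
  simp [det2]

theorem forall_exists_smul_add_smul_iff_isUnit_det2 {u v : R × R} :
    (∀ w : R × R, ∃ s t : R, s • u + t • v = w) ↔ IsUnit (det2 u v) := by
  constructor
  · intro h
    obtain ⟨s₁, t₁, h₁⟩ := h (1, 0)
    obtain ⟨s₂, t₂, h₂⟩ := h (0, 1)
    simp only [Prod.ext_iff, Prod.fst_add, Prod.snd_add, Prod.smul_fst, Prod.smul_snd,
      smul_eq_mul] at h₁ h₂
    refine IsUnit.of_mul_eq_one (s₁ * t₂ - s₂ * t₁) ?_
    unfold det2
    linear_combination (s₂ * u.2 + t₂ * v.2) * h₁.1 + h₂.2 - (s₂ * u.1 + t₂ * v.1) * h₁.2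
  · -- Cramer's rule
    rintro ⟨d, hd⟩ w
    refine ⟨↑d⁻¹ * det2 w v, ↑d⁻¹ * det2 u w, ?_⟩
    have hinv : (↑d⁻¹ : R) * det2 u v = 1 := by rw [← hd, Units.inv_mul]
    ext <;> simp only [Prod.fst_add, Prod.snd_add, Prod.smul_fst, Prod.smul_snd, smul_eq_mul] <;>
      unfold det2 at hinv ⊢
    · linear_combination w.1 * hinv
    · linear_combination w.2 * hinv

theorem eq_zero_of_smul_eq_smul_of_isUnit_det2 {u v : R × R} (hdet : IsUnit (det2 u v))
    {s t : R} (h : s • u = t • v) : s = 0 := by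
  simp only [Prod.ext_iff, Prod.smul_fst, Prod.smul_snd, smul_eq_mul] at h
  refine hdet.mul_left_eq_zero.1 ?_
  unfold det2
  linear_combination v.2 * h.1 - v.1 * h.2

end Det

section ZModPair

variable {n : ℕ}

theorem closure_pair_eq_top_iff_isUnit_det2 {x y : Multiplicative (ZMod n × ZMod n)} :
    Subgroup.closure {x, y} = ⊤ ↔ IsUnit (det2 x.toAdd y.toAdd) := by
  rw [← forall_exists_smul_add_smul_iff_isUnit_det2, Subgroup.eq_top_iff']
  simp only [Subgroup.mem_closure_pair]
  refine ⟨fun h w => ?_, fun h g => ?_⟩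
  · obtain ⟨i, j, hij⟩ := h (ofAdd w)
    exact ⟨i, j, by simpa [Int.cast_smul_eq_zsmul] using congrArg toAdd hij⟩
  · obtain ⟨s, t, hst⟩ := h g.toAdd
    refine ⟨s.cast, t.cast, toAdd.injective ?_⟩
    simpa [← Int.cast_smul_eq_zsmul (ZMod n), ZMod.intCast_zmod_cast] using hst

theorem isBeauvilleStructure_ofAdd {x y a b : ZMod n × ZMod n}
    (hxy : IsUnit (det2 x y)) (hab : IsUnit (det2 a b))
    (hcross : ∀ u ∈ ({x, y, -(x + y)} : Set (ZMod n × ZMod n)),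
      ∀ v ∈ ({a, b, -(a + b)} : Set (ZMod n × ZMod n)), IsUnit (det2 u v)) :
    IsBeauvilleStructure (ofAdd x) (ofAdd y) (ofAdd (-(x + y)))
      (ofAdd a) (ofAdd b) (ofAdd (-(a + b))) := by
  have himage (p q r : ZMod n × ZMod n) :
      ({ofAdd p, ofAdd q, ofAdd r} : Set (Multiplicative (ZMod n × ZMod n))) =
        ofAdd '' {p, q, r} := by
    simp only [Set.image_insert_eq, Set.image_singleton]
  have hgen {p q r : ZMod n × ZMod n} (hpq : IsUnit (det2 p q)) :
      Subgroup.closure {ofAdd p, ofAdd q, ofAdd r} = ⊤ :=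
    top_unique <| (closure_pair_eq_top_iff_isUnit_det2.2 hpq).ge.trans <|
      Subgroup.closure_mono <|
        Set.insert_subset_insert (Set.singleton_subset_iff.2 (Set.mem_insert _ _))
  refine ⟨toAdd.injective (by simp), toAdd.injective (by simp), hgen hxy, hgen hab, ?_⟩
  simp only [himage, Set.forall_mem_image]
  intro u hu v hv g i j huv
  rw [mul_inv_cancel_comm] at huv
  have hsmul : (i : ZMod n) • u = (j : ZMod n) • v := by
    simpa [Int.cast_smul_eq_zsmul] using congrArg toAdd huv
  apply toAdd.injective
  simp [← Int.cast_smul_eq_zsmul (ZMod n),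
    eq_zero_of_smul_eq_smul_of_isUnit_det2 (hcross u hu v hv) hsmul]

theorem exists_isBeauvilleStructure_zmod_prod (hn : Nat.Coprime n 6) :
    ∃ x y z a b c : Multiplicative (ZMod n × ZMod n), IsBeauvilleStructure x y z a b c := by
  have hunit {d : ℕ} (hd : d ∣ 6 ^ 2) : IsUnit (d : ZMod n) :=
    (ZMod.isUnit_iff_coprime d n).2 (Nat.Coprime.coprime_dvd_left hd (hn.pow_right 2).symm)
  refine ⟨_, _, _, _, _, _, isBeauvilleStructure_ofAdd (x := (1, 0)) (y := (0, 1))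
    (a := (1, 2)) (b := (3, 4)) ?_ ?_ ?_⟩
  · simp [det2]
  · norm_num [det2]
    exact_mod_cast hunit (by norm_num)
  · simp only [Set.mem_insert_iff, Set.mem_singleton_iff]
    rintro u (rfl | rfl | rfl) v (rfl | rfl | rfl) <;> norm_num [det2] <;>
      exact_mod_cast hunit (by norm_num)

end ZModPair

section Reduction

variable {n p : ℕ} (hpn : p ∣ n)

def reduceMod : ZMod n × ZMod n →+* ZMod p × ZMod p :=
  (ZMod.castHom hpn (ZMod p)).prodMap (ZMod.castHom hpn (ZMod p))

theorem ZMod.nsmul_div_eq_zero_iff [NeZero n] (c : ZMod n) :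
    (n / p) • c = 0 ↔ ZMod.castHom hpn (ZMod p) c = 0 := by
  have hm : 0 < n / p := Nat.div_pos (Nat.le_of_dvd (NeZero.pos n) hpn)
    (Nat.pos_of_dvd_of_pos hpn (NeZero.pos n))
  rw [← ZMod.natCast_zmod_val c, nsmul_eq_mul, ← Nat.cast_mul, map_natCast,
    ZMod.natCast_eq_zero_iff, ZMod.natCast_eq_zero_iff]
  have := Nat.mul_dvd_mul_iff_left (b := p) (c := c.val) hm
  rwa [Nat.div_mul_cancel hpn] at this

theorem nsmul_div_eq_zero_iff_reduceMod_eq_zero [NeZero n] (w : ZMod n × ZMod n) :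
    (n / p) • w = 0 ↔ reduceMod hpn w = 0 := by
  simp only [Prod.ext_iff, Prod.smul_fst, Prod.smul_snd, Prod.fst_zero, Prod.snd_zero,
    ZMod.nsmul_div_eq_zero_iff hpn]
  rfl

theorem reduceMod_eq_zero_of_disjoint_zpowers [NeZero n]
    {u v : Multiplicative (ZMod n × ZMod n)}
    (huv : Disjoint (Subgroup.zpowers u) (Subgroup.zpowers v)) {l : ZMod p}
    (h : reduceMod hpn u.toAdd = l • reduceMod hpn v.toAdd) : reduceMod hpn u.toAdd = 0 := by
  have : NeZero p := ⟨fun hp => NeZero.ne n (Nat.eq_zero_of_zero_dvd (hp ▸ hpn))⟩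
  set m := n / p
  have hlift : m • (u.toAdd - l.val • v.toAdd) = 0 := by
    rw [nsmul_div_eq_zero_iff_reduceMod_eq_zero hpn, map_sub, map_nsmul, h,
      ← Nat.cast_smul_eq_nsmul (ZMod p), ZMod.natCast_zmod_val, sub_self]
  have hpow : u ^ m = v ^ (m * l.val) := by
    apply toAdd.injective
    rw [toAdd_pow, toAdd_pow, mul_comm m, mul_nsmul, ← sub_eq_zero, ← smul_sub, hlift]
  have hone : u ^ m = 1 := Subgroup.disjoint_def'.1 huv (Subgroup.npow_mem_zpowers u m)
    (Subgroup.npow_mem_zpowers v _) hpow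
  rw [← nsmul_div_eq_zero_iff_reduceMod_eq_zero hpn, ← toAdd_pow, hone, toAdd_one]

theorem det2_reduceMod_ne_zero (hp : p.Prime) {x y : Multiplicative (ZMod n × ZMod n)}
    (h : Subgroup.closure {x, y} = ⊤) :
    det2 (reduceMod hpn x.toAdd) (reduceMod hpn y.toAdd) ≠ 0 := by
  have : Fact p.Prime := ⟨hp⟩
  rw [reduceMod, map_det2]
  exact ((closure_pair_eq_top_iff_isUnit_det2.1 h).map _).ne_zero

theorem reduceMod_toAdd_eq_neg_add {x y z : Multiplicative (ZMod n × ZMod n)}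
    (h : x * y * z = 1) :
    reduceMod hpn z.toAdd = -(reduceMod hpn x.toAdd + reduceMod hpn y.toAdd) := by
  have : x.toAdd + y.toAdd + z.toAdd = 0 := by simpa using congrArg toAdd h
  rw [eq_neg_of_add_eq_zero_right this, map_neg, map_add]

end Reduction

def TrianglesShareLine (K : Type*) [CommRing K] : Prop :=
  ∀ X Y A B : K × K, det2 X Y ≠ 0 → det2 A B ≠ 0 →
    ∃ U ∈ [X, Y, -(X + Y)], ∃ V ∈ [A, B, -(A + B)], U ≠ 0 ∧ ∃ l : K, U = l • V

theorem trianglesShareLine_zmod_two : TrianglesShareLine (ZMod 2) := by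
  unfold TrianglesShareLine det2
  decide

theorem trianglesShareLine_zmod_three : TrianglesShareLine (ZMod 3) := by
  unfold TrianglesShareLine det2
  decide

theorem IsBeauvilleStructure.not_dvd {n p : ℕ} [NeZero n] (hp : p.Prime)
    (hK : TrianglesShareLine (ZMod p)) {x y z a b c : Multiplicative (ZMod n × ZMod n)}
    (h : IsBeauvilleStructure x y z a b c) : ¬ p ∣ n := by
  intro hpn
  set π : Multiplicative (ZMod n × ZMod n) → ZMod p × ZMod p := fun u => reduceMod hpn u.toAdd
  have htriangle {s t r : Multiplicative (ZMod n × ZMod n)} (hstr : s * t * r = 1) :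
      [π s, π t, -(π s + π t)] = [s, t, r].map π := by
    simp [π, reduceMod_toAdd_eq_neg_add hpn hstr]
  obtain ⟨U, hU, V, hV, hU0, l, hUV⟩ := hK _ _ _ _
    (det2_reduceMod_ne_zero hpn hp h.closure_left_eq_top)
    (det2_reduceMod_ne_zero hpn hp h.closure_right_eq_top)
  obtain ⟨u, hu, rfl⟩ := List.mem_map.1 (htriangle h.1 ▸ hU)
  obtain ⟨v, hv, rfl⟩ := List.mem_map.1 (htriangle h.2.1 ▸ hV)
  exact hU0 (reduceMod_eq_zero_of_disjoint_zpowers hpn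
    (h.disjoint_zpowers (by simpa using hu) (by simpa using hv)) hUV)

/-- A finite abelian group admits an unmixed Beauville structure if and only
if it is isomorphic to `(ZMod n) × (ZMod n)` for some `n` coprime to `6`. -/
theorem abelian_beauville_iff
    {G : Type*} [CommGroup G] [Finite G] :
    (∃ x y z a b c : G, IsBeauvilleStructure x y z a b c) ↔
      ∃ n : ℕ, Nat.gcd n 6 = 1 ∧ Nonempty (G ≃* Multiplicative (ZMod n × ZMod n)) := by
  constructor
  · rintro ⟨x, y, z, a, b, c, h⟩
    obtain ⟨e⟩ := h.nonempty_mulEquiv_zmod_prod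
    have : NeZero (Monoid.exponent G) := ⟨Monoid.exponent_ne_zero_of_finite⟩
    have he := h.map e
    refine ⟨Monoid.exponent G, ?_, ⟨e⟩⟩
    exact Nat.Coprime.symm <| Nat.Coprime.mul_left (Nat.prime_two.coprime_iff_not_dvd.2
      (he.not_dvd Nat.prime_two trianglesShareLine_zmod_two))
      (Nat.prime_three.coprime_iff_not_dvd.2
        (he.not_dvd Nat.prime_three trianglesShareLine_zmod_three))
  · rintro ⟨n, hn, ⟨e⟩⟩
    obtain ⟨x, y, z, a, b, c, h⟩ := exists_isBeauvilleStructure_zmod_prod hn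
    exact ⟨_, _, _, _, _, _, h.map e.symm⟩
end
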